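/- Let α, γ, λ, ν > 0 and τ ≥ 0. Then ∫₀^∞ ∫₀^∞ e^(−(αx)^λ) · ( e^(−(γ·e^((ατx)^λ/ν)·y)^ν) − e^(−(γy)^ν) ) dy dx = (1/(α·γ)) · Γ(1 + 1/ν) · Γ(1 + 1/λ) · ( (ν/(ν + τ^λ))^(1/λ) − 1 ), where Γ denotes the gamma function. -/

import Mathlib

/-!
Integrating in `y` first, every Weibull-type integral reduces, after the substitution
`u = c y`, to `∫₀^∞ e^(-(c y)^p) dy = Γ(1 + 1/p) / c`. The inner integral is therefore
`e^(-(αx)^λ) Γ(1 + 1/ν) / γ · (e^(-(ατx)^λ/ν) - 1)`, and the two exponentials in `x` combine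
into `e^(-(ακx)^λ)` with `κ = (1 + τ^λ/ν)^(1/λ)`, so the outer integral is of the same type.
-/

open MeasureTheory Real Set

theorem integrableOn_exp_neg_mul_rpow_Ioi {p c : ℝ} (hp : 0 < p) (hc : 0 < c) :
    IntegrableOn (fun y : ℝ => exp (-(c * y) ^ p)) (Ioi 0) := by
  refine (integrableOn_Ioi_comp_mul_left_iff (fun u => exp (-u ^ p)) 0 hc).mpr ?_
  simpa [rpow_zero] using integrableOn_rpow_mul_exp_neg_rpow neg_one_lt_zero hp

theorem integral_exp_neg_mul_rpow_Ioi {p c : ℝ} (hp : 0 < p) (hc : 0 < c) :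
    ∫ y in Ioi (0 : ℝ), exp (-(c * y) ^ p) = Gamma (1 / p + 1) / c := by
  rw [integral_comp_mul_left_Ioi (fun u => exp (-u ^ p)) 0 hc, mul_zero, integral_exp_neg_rpow hp,
    smul_eq_mul, inv_mul_eq_div]

theorem integral_exp_neg_mul_rpow_sub_Ioi {p a b : ℝ} (hp : 0 < p) (ha : 0 < a) (hb : 0 < b) :
    ∫ y in Ioi (0 : ℝ), (exp (-(a * y) ^ p) - exp (-(b * y) ^ p))
      = Gamma (1 / p + 1) * (a⁻¹ - b⁻¹) := by
  rw [integral_sub (integrableOn_exp_neg_mul_rpow_Ioi hp ha)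
    (integrableOn_exp_neg_mul_rpow_Ioi hp hb), integral_exp_neg_mul_rpow_Ioi hp ha,
    integral_exp_neg_mul_rpow_Ioi hp hb]
  ring

theorem mul_rpow_add_mul_rpow_div {l ν α τ x : ℝ} (hl : l ≠ 0) (hν : 0 ≤ ν) (hα : 0 ≤ α)
    (hτ : 0 ≤ τ) (hx : 0 ≤ x) :
    (α * x) ^ l + (α * τ * x) ^ l / ν = (α * (1 + τ ^ l / ν) ^ (1 / l) * x) ^ l := by
  have hκ : 0 ≤ 1 + τ ^ l / ν := by positivity
  rw [mul_right_comm α τ x, mul_right_comm α _ x, mul_rpow (by positivity) hτ,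
    mul_rpow (by positivity) (rpow_nonneg hκ _), ← rpow_mul hκ, one_div_mul_cancel hl, rpow_one]
  ring

theorem weibull_hoeffding_integral (α γ l ν τ : ℝ) (hα : 0 < α) (hγ : 0 < γ)
    (hl : 0 < l) (hν : 0 < ν) (hτ : 0 ≤ τ) :
    ∫ x in Set.Ioi (0:ℝ), ∫ y in Set.Ioi (0:ℝ),
        Real.exp (-((α * x) ^ l)) *
          (Real.exp (-((γ * Real.exp ((α * τ * x) ^ l / ν) * y) ^ ν)) -
            Real.exp (-((γ * y) ^ ν)))
      = (1 / (α * γ)) * Real.Gamma (1 + 1 / ν) * Real.Gamma (1 + 1 / l) *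
          ((ν / (ν + τ ^ l)) ^ (1 / l) - 1) := by
  set κ := (1 + τ ^ l / ν) ^ (1 / l)
  have hκ : 0 < κ := by positivity
  have inner : ∀ x ∈ Ioi (0 : ℝ),
      ∫ y in Ioi (0 : ℝ), exp (-(α * x) ^ l) *
          (exp (-(γ * exp ((α * τ * x) ^ l / ν) * y) ^ ν) - exp (-(γ * y) ^ ν))
        = Gamma (1 / ν + 1) * γ⁻¹ * (exp (-(α * κ * x) ^ l) - exp (-(α * x) ^ l)) := by
    intro x hx
    rw [integral_const_mul, integral_exp_neg_mul_rpow_sub_Ioi hν (by positivity) hγ,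
      ← mul_rpow_add_mul_rpow_div hl.ne' hν.le hα.le hτ (le_of_lt hx), neg_add, exp_add,
      exp_neg ((α * τ * x) ^ l / ν), mul_inv]
    ring
  have hκ_inv : κ⁻¹ = (ν / (ν + τ ^ l)) ^ (1 / l) := by
    rw [← inv_rpow (by positivity), inv_eq_one_div, one_add_div hν.ne', one_div_div]
  rw [setIntegral_congr_fun measurableSet_Ioi inner, integral_const_mul,
    integral_exp_neg_mul_rpow_sub_Ioi hl (by positivity) hα, mul_inv, hκ_inv, add_comm 1 (1 / ν),
    add_comm 1 (1 / l)]
  field_simp
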